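/- arXiv:1412.4360 — 2 statements merged into one kernel-verified Lean document; each statement's English description precedes it below -/
import Mathlib

section
/- Let V, W be finite dimensional vector spaces over a field, ∂ : V → V a linear map with ∂² = 0, and Φ : V → W, Ψ : W → V, R : V → V linear maps satisfying Ψ∘Φ = id_V + R∘∂ + ∂∘R. Then dim(ker ∂ / im ∂) ≤ dim W. -/
/-!
By the homotopy identity, a cycle `x` with `Φ x = 0` is the boundary `d (-R x)`, so `Φ` restricted
to the cycles has kernel inside the boundaries, and the homology is a quotient of its image in `W`.
-/

open LinearMap

theorem Submodule.finrank_quotient_le_of_ker_le {K M N : Type*} [Field K]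
    [AddCommGroup M] [Module K M] [AddCommGroup N] [Module K N] [FiniteDimensional K N]
    {S : Submodule K M} (f : M →ₗ[K] N) (hf : ker f ≤ S) :
    Module.finrank K (M ⧸ S) ≤ Module.finrank K N := by
  have := Module.Finite.equiv f.quotKerEquivRange.symm
  calc Module.finrank K (M ⧸ S)
      ≤ Module.finrank K (M ⧸ ker f) :=
        finrank_le_finrank_of_surjective (Submodule.factor_surjective hf)
    _ = Module.finrank K (range f) := f.quotKerEquivRange.finrank_eq
    _ ≤ Module.finrank K N := Submodule.finrank_le _

theorem mem_range_of_apply_eq_zero_of_homotopy {K V W : Type*} [Field K]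
    [AddCommGroup V] [Module K V] [AddCommGroup W] [Module K W]
    {d R : V →ₗ[K] V} {Φ : V →ₗ[K] W} {Ψ : W →ₗ[K] V}
    (h : Ψ ∘ₗ Φ = LinearMap.id + R ∘ₗ d + d ∘ₗ R) {x : V} (hdx : d x = 0) (hΦx : Φ x = 0) :
    x ∈ range d := by
  have hx : 0 = x + d (R x) := by simpa [hdx, hΦx] using congr($h x)
  exact ⟨-R x, by rw [map_neg, neg_eq_iff_add_eq_zero, add_comm, ← hx]⟩

theorem homology_dim_le_general (K V W : Type*) [Field K]
    [AddCommGroup V] [Module K V]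
    [AddCommGroup W] [Module K W] [FiniteDimensional K W]
    (d : V →ₗ[K] V)
    (Φ : V →ₗ[K] W) (Ψ : W →ₗ[K] V) (R : V →ₗ[K] V)
    (h : Ψ ∘ₗ Φ = LinearMap.id + R ∘ₗ d + d ∘ₗ R) :
    Module.finrank K
        (LinearMap.ker d ⧸ (LinearMap.range d).comap (LinearMap.ker d).subtype)
      ≤ Module.finrank K W :=
  Submodule.finrank_quotient_le_of_ker_le (Φ ∘ₗ (ker d).subtype) fun x hx =>
    mem_range_of_apply_eq_zero_of_homotopy h x.2 hx

/-- If `Ψ ∘ Φ = id + R∘d + d∘R` with `d² = 0`, then the dimension of the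
homology `ker d / im d` is at most `dim W`. -/
theorem homology_dim_le (K V W : Type*) [Field K]
    [AddCommGroup V] [Module K V] [FiniteDimensional K V]
    [AddCommGroup W] [Module K W] [FiniteDimensional K W]
    (d : V →ₗ[K] V) (hd : d ∘ₗ d = 0)
    (Φ : V →ₗ[K] W) (Ψ : W →ₗ[K] V) (R : V →ₗ[K] V)
    (h : Ψ ∘ₗ Φ = LinearMap.id + R ∘ₗ d + d ∘ₗ R) :
    Module.finrank K
        (LinearMap.ker d ⧸ (LinearMap.range d).comap (LinearMap.ker d).subtype)
      ≤ Module.finrank K W :=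
  homology_dim_le_general K V W d Φ Ψ R h
end

section
/- Let a : ℝ → ℂ be a differentiable function satisfying the ODE a'(s) + 2π(k + η(s))·a(s) = 0, where k ∈ ℤ and η : ℝ → ℝ is continuous with lim_{s→−∞} η(s) = k⁻ and lim_{s→+∞} η(s) = k⁺ for integers k⁻ ≥ k⁺. If a tends to 0 exponentially at both ends (i.e. there is δ > 0 with e^{δ|s|}a(s) bounded), and a is not identically zero, then k > −k⁺ and k < −k⁻, a contradiction; hence a ≡ 0. -/
/-! The integrating factor solves `a' = -g a` as `a t = a s · exp (-∫ₛᵗ g)`, so a solution vanishing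
at one point vanishes everywhere. If `g ≤ c` near `+∞`, a nonzero solution decays no faster than
`e^{-ct}`, which is incompatible with decay like `e^{-δt}` when `c < δ`; symmetrically at `-∞`.
For `g = 2π(k + η)` one of the two ends applies: either `k + k⁺ ≤ 0`, or `k + k⁻ ≥ k + k⁺ > 0`. -/

open Filter

section LinearODE

variable {a : ℝ → ℂ} {g : ℝ → ℝ}

theorem eq_mul_exp_neg_integral_of_hasDerivAt (hg : Continuous g)
    (ha : ∀ t, HasDerivAt a (-(g t : ℂ) * a t) t) (s t : ℝ) :
    a t = a s * Complex.exp ((-∫ u in s..t, g u : ℝ) : ℂ) := by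
  set G : ℝ → ℝ := fun t => ∫ u in s..t, g u
  have hG : ∀ t, HasDerivAt (fun t => (G t : ℂ)) (g t) t := fun t =>
    (hg.integral_hasStrictDerivAt s t).hasDerivAt.ofReal_comp
  have hF : ∀ t, HasDerivAt (fun t => a t * Complex.exp (G t)) 0 t := fun t =>
    ((ha t).mul (hG t).cexp).congr_deriv (by ring)
  have hconst := is_const_of_deriv_eq_zero (fun t => (hF t).differentiableAt)
    (fun t => (hF t).deriv) t s
  simp only [G, intervalIntegral.integral_same, Complex.ofReal_zero, Complex.exp_zero,
    mul_one] at hconst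
  rw [← hconst, Complex.ofReal_neg, mul_assoc, ← Complex.exp_add, add_neg_cancel,
    Complex.exp_zero, mul_one]

theorem norm_eq_norm_mul_exp_neg_integral_of_hasDerivAt (hg : Continuous g)
    (ha : ∀ t, HasDerivAt a (-(g t : ℂ) * a t) t) (s t : ℝ) :
    ‖a t‖ = ‖a s‖ * Real.exp (-∫ u in s..t, g u) := by
  rw [eq_mul_exp_neg_integral_of_hasDerivAt hg ha s t, norm_mul, Complex.norm_exp_ofReal]

theorem eq_zero_of_eventually_le_of_decay_atTop (hg : Continuous g)
    (ha : ∀ t, HasDerivAt a (-(g t : ℂ) * a t) t) {c δ C : ℝ} (hcδ : c < δ)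
    (hgc : ∀ᶠ t in atTop, g t ≤ c)
    (hdecay : ∀ᶠ t in atTop, Real.exp (δ * t) * ‖a t‖ ≤ C) (s : ℝ) : a s = 0 := by
  have hnorm := norm_eq_norm_mul_exp_neg_integral_of_hasDerivAt hg ha
  obtain ⟨s₀, hs₀⟩ := eventually_atTop.1 hgc
  set s₁ := max s₀ s
  have hgrowth : ∀ t ≥ s₁, ‖a s₁‖ * Real.exp (-(c * (t - s₁))) ≤ ‖a t‖ := by
    intro t ht
    have hint : ∫ u in s₁..t, g u ≤ c * (t - s₁) :=
      calc ∫ u in s₁..t, g u ≤ ∫ _ in s₁..t, c :=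
            intervalIntegral.integral_mono_on ht (hg.intervalIntegrable _ _)
              intervalIntegrable_const fun u hu => hs₀ u ((le_max_left _ _).trans hu.1)
        _ = c * (t - s₁) := by rw [intervalIntegral.integral_const, smul_eq_mul, mul_comm]
    rw [hnorm s₁ t]
    gcongr
  have hbound : ∀ᶠ t in atTop, ‖a s₁‖ ≤ C * Real.exp ((c - δ) * t - c * s₁) := by
    filter_upwards [hdecay, eventually_ge_atTop s₁] with t hdecay_t ht
    calc ‖a s₁‖ = ‖a s₁‖ * Real.exp (-(c * (t - s₁))) * Real.exp (δ * t)
          * Real.exp ((c - δ) * t - c * s₁) := by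
          rw [mul_assoc, mul_assoc, ← Real.exp_add, ← Real.exp_add]; ring_nf; simp
      _ ≤ ‖a t‖ * Real.exp (δ * t) * Real.exp ((c - δ) * t - c * s₁) := by
          gcongr; exact hgrowth t ht
      _ ≤ C * Real.exp ((c - δ) * t - c * s₁) := by
          gcongr; linarith
  have hlim : Tendsto (fun t => C * Real.exp ((c - δ) * t - c * s₁)) atTop (nhds 0) := by
    simpa [sub_eq_add_neg] using (Real.tendsto_exp_atBot.comp (tendsto_atBot_add_const_right _ _
      (tendsto_id.const_mul_atTop_of_neg (sub_neg.2 hcδ)))).const_mul C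
  have hs₁ : a s₁ = 0 := norm_le_zero_iff.1 (ge_of_tendsto hlim hbound)
  rw [← norm_eq_zero, hnorm s₁ s, norm_eq_zero.2 hs₁, zero_mul]

theorem eq_zero_of_eventually_ge_of_decay_atBot (hg : Continuous g)
    (ha : ∀ t, HasDerivAt a (-(g t : ℂ) * a t) t) {c δ C : ℝ} (hcδ : -δ < c)
    (hgc : ∀ᶠ t in atBot, c ≤ g t)
    (hdecay : ∀ᶠ t in atBot, Real.exp (-(δ * t)) * ‖a t‖ ≤ C) (s : ℝ) : a s = 0 := by
  have ha_neg : ∀ t, HasDerivAt (fun t => a (-t)) (-((-g (-t) : ℝ) : ℂ) * a (-t)) t :=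
    fun t => ((ha (-t)).scomp t (hasDerivAt_neg t)).congr_deriv (by simp)
  have hgc_neg : ∀ᶠ t in atTop, -g (-t) ≤ -c :=
    (tendsto_neg_atTop_atBot.eventually hgc).mono fun _ => neg_le_neg
  have hdecay_neg : ∀ᶠ t in atTop, Real.exp (δ * t) * ‖a (-t)‖ ≤ C :=
    (tendsto_neg_atTop_atBot.eventually hdecay).mono fun t h => by simpa using h
  simpa using eq_zero_of_eventually_le_of_decay_atTop (hg.comp continuous_neg).neg ha_neg
    (neg_lt.1 hcδ) hgc_neg hdecay_neg (-s)

end LinearODE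

/-- Fourier-mode argument: a solution of `a' + 2π(k+η)a = 0` that decays
exponentially at both ends, where `η → k⁻` at `-∞` and `η → k⁺` at `+∞`
with `k⁻ ≥ k⁺`, vanishes identically. -/
theorem fourier_mode_vanishes (a : ℝ → ℂ) (η : ℝ → ℝ) (k km kp : ℤ)
    (ha : Differentiable ℝ a)
    (hode : ∀ s : ℝ, deriv a s + ((2 * Real.pi * ((k : ℝ) + η s) : ℝ) : ℂ) * a s = 0)
    (hη : Continuous η)
    (hm : Tendsto η atBot (nhds (km : ℝ)))
    (hp : Tendsto η atTop (nhds (kp : ℝ)))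
    (hk : kp ≤ km)
    (hdecay : ∃ δ : ℝ, 0 < δ ∧ ∃ C : ℝ, ∀ s : ℝ,
      Real.exp (δ * |s|) * ‖a s‖ ≤ C) :
    ∀ s : ℝ, a s = 0 := by
  obtain ⟨δ, hδ, C, hC⟩ := hdecay
  set g : ℝ → ℝ := fun t => 2 * Real.pi * ((k : ℝ) + η t)
  have hg : Continuous g := by fun_prop
  have ha' : ∀ t, HasDerivAt a (-(g t : ℂ) * a t) t := fun t =>
    (ha t).hasDerivAt.congr_deriv (by rw [neg_mul]; exact eq_neg_of_add_eq_zero_left (hode t))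
  have hg_lim : ∀ {l : Filter ℝ} {m : ℝ}, Tendsto η l (nhds m) →
      Tendsto g l (nhds (2 * Real.pi * (k + m))) := fun h => (h.const_add _).const_mul _
  have hdecay_atTop : ∀ᶠ t in atTop, Real.exp (δ * t) * ‖a t‖ ≤ C :=
    .of_forall fun t => le_trans (by gcongr; exact le_abs_self t) (hC t)
  have hdecay_atBot : ∀ᶠ t in atBot, Real.exp (-(δ * t)) * ‖a t‖ ≤ C :=
    .of_forall fun t => le_trans (by rw [← mul_neg]; gcongr; exact neg_le_abs t) (hC t)
  rcases le_or_gt ((k : ℝ) + kp) 0 with hkp | hkp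
  · refine eq_zero_of_eventually_le_of_decay_atTop hg ha' (half_lt_self hδ)
      ((hg_lim hp).eventually_le_const ?_) hdecay_atTop
    nlinarith [Real.pi_pos]
  · have hkm : 0 < (k : ℝ) + km := hkp.trans_le (by gcongr)
    exact eq_zero_of_eventually_ge_of_decay_atBot hg ha' (neg_neg_of_pos hδ)
      ((hg_lim hm).eventually_const_le (by positivity)) hdecay_atBot
end
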